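/- arXiv:1805.06434 — 2 statements merged into one kernel-verified Lean document; each statement's English description precedes it below -/
import Mathlib

section
/- Let p ≥ 1, a ∈ ℝ, and t ∈ [0,1]. Then |a - t|^p ≥ (1-t)^{p-1}(|a|^p - t). -/
open Real

/-! For `t < 1`, write `x = (1 - t) • u + t • 1` with `u = (x - t) / (1 - t)`; convexity of
`y ↦ y ^ p` gives `x ^ p - t ≤ (1 - t) u ^ p`, and multiplying by `(1 - t) ^ (p - 1)` turns the right
side into `(x - t) ^ p`. Applied to `x = |a|` this gives the claim via `|a| - t ≤ |a - t|` when
`t ≤ |a|`; when `|a| ≤ t ≤ 1` the left side is nonpositive since `|a| ^ p ≤ |a|`. -/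

namespace Real

variable {p t x : ℝ}

theorem one_sub_rpow_mul_rpow_sub_le_of_lt_one (hp : 1 ≤ p) (ht₀ : 0 ≤ t) (ht₁ : t < 1)
    (hx : t ≤ x) : (1 - t) ^ (p - 1) * (x ^ p - t) ≤ (x - t) ^ p := by
  have hs : 0 < 1 - t := by linarith
  set u := (x - t) / (1 - t)
  have hu : 0 ≤ u := div_nonneg (by linarith) hs.le
  have hsu : (1 - t) * u = x - t := mul_div_cancel₀ _ hs.ne'
  have hconv : x ^ p ≤ (1 - t) * u ^ p + t := by
    simpa [smul_eq_mul, one_rpow, hsu] using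
      (convexOn_rpow hp).2 (Set.mem_Ici.mpr hu) (Set.mem_Ici.mpr zero_le_one) hs.le ht₀
        (sub_add_cancel 1 t)
  calc (1 - t) ^ (p - 1) * (x ^ p - t)
      ≤ (1 - t) ^ (p - 1) * ((1 - t) * u ^ p) :=
        mul_le_mul_of_nonneg_left (by linarith) (rpow_nonneg hs.le _)
    _ = (x - t) ^ p := by
        rw [← mul_assoc, ← rpow_add_one hs.ne', sub_add_cancel, ← mul_rpow hs.le hu, hsu]

theorem one_sub_rpow_mul_rpow_sub_le (hp : 1 ≤ p) (ht₀ : 0 ≤ t) (ht₁ : t ≤ 1) (hx : t ≤ x) :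
    (1 - t) ^ (p - 1) * (x ^ p - t) ≤ (x - t) ^ p := by
  rcases ht₁.lt_or_eq with ht₁ | rfl
  · exact one_sub_rpow_mul_rpow_sub_le_of_lt_one hp ht₀ ht₁ hx
  rcases hp.eq_or_lt with rfl | hp
  · simp
  rw [sub_self, zero_rpow (by linarith), zero_mul]
  exact rpow_nonneg (by linarith) p

theorem one_sub_rpow_mul_rpow_sub_nonpos (hp : 1 ≤ p) (ht₁ : t ≤ 1) (hx₀ : 0 ≤ x) (hx : x ≤ t) :
    (1 - t) ^ (p - 1) * (x ^ p - t) ≤ 0 :=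
  mul_nonpos_of_nonneg_of_nonpos (rpow_nonneg (by linarith) _)
    (by linarith [rpow_le_self_of_le_one hx₀ (hx.trans ht₁) hp])

end Real

/-- Elementary convexity inequality (Frank–Seiringer, Lemma 2.6):
for p ≥ 1, a ∈ ℝ, t ∈ [0,1], one has |a - t|^p ≥ (1-t)^{p-1}(|a|^p - t). -/
theorem abs_sub_rpow_ge (p a t : ℝ) (hp : 1 ≤ p) (ht : t ∈ Set.Icc (0 : ℝ) 1) :
    (1 - t) ^ (p - 1) * (|a| ^ p - t) ≤ |a - t| ^ p := by
  obtain ⟨ht₀, ht₁⟩ := ht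
  rcases le_total t |a| with hta | hat
  · have hdist : |a| - t ≤ |a - t| := by
      simpa [abs_of_nonneg ht₀] using abs_sub_abs_le_abs_sub a t
    calc (1 - t) ^ (p - 1) * (|a| ^ p - t) ≤ (|a| - t) ^ p :=
          one_sub_rpow_mul_rpow_sub_le hp ht₀ ht₁ hta
      _ ≤ |a - t| ^ p := rpow_le_rpow (by linarith) hdist (by linarith)
  · exact (one_sub_rpow_mul_rpow_sub_nonpos hp ht₁ (abs_nonneg a) hat).trans
      (rpow_nonneg (abs_nonneg _) p)
end

section
/- Let d ≥ 2, p ≥ 1, s ∈ (0,1), and define for v = (v', v_d) ∈ ℝ^{d-1} × ℝ the quantity f(v) = ∫_{ℝ^{d-1}} |v'·z' + v_d|^p (|z'|² + 1)^{-(d+ps+p)/2} dz'. Then f(v) ≥ (η₁/2)|v_d|^p + (η₂/2)|v'|^p, where η₁ = ∫_{ℝ^{d-1}} (|z'|²+1)^{-(d+ps+p)/2} dz' and η₂ = ∫_{ℝ^{d-1}} |z₁|^p (|z'|²+1)^{-(d+ps+p)/2} dz'. -/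
/-!
Substituting `z ↦ -z` shows that `f(v', v_d) = f(v', -v_d)`, so `2 f(v)` is the integral of
`|v'·z' + v_d|^p + |v'·z' - v_d|^p`, which dominates `|v'·z'|^p + |v_d|^p` pointwise for `p ≥ 1`.
A reflection taking the first basis vector to `v' / |v'|` turns the integral of `|v'·z'|^p` into
`|v'|^p η₂`.
-/

open MeasureTheory Real

theorem abs_rpow_add_abs_rpow_le {p : ℝ} (hp : 1 ≤ p) (x y : ℝ) :
    |x| ^ p + |y| ^ p ≤ |x + y| ^ p + |x - y| ^ p := by
  have hsum : |x| + |y| = |x + y| ∨ |x| + |y| = |x - y| := by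
    rcases le_total 0 x with hx | hx <;> rcases le_total 0 y with hy | hy
    · left; rw [abs_of_nonneg hx, abs_of_nonneg hy, abs_of_nonneg (by linarith)]
    · right; rw [abs_of_nonneg hx, abs_of_nonpos hy, abs_of_nonneg (by linarith)]; ring
    · right; rw [abs_of_nonpos hx, abs_of_nonneg hy, abs_of_nonpos (by linarith)]; ring
    · left; rw [abs_of_nonpos hx, abs_of_nonpos hy, abs_of_nonpos (by linarith)]; ring
  have hsuper := Real.add_rpow_le_rpow_add (abs_nonneg x) (abs_nonneg y) hp
  have hadd : 0 ≤ |x + y| ^ p := by positivity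
  have hsub : 0 ≤ |x - y| ^ p := by positivity
  rcases hsum with h | h <;> rw [h] at hsuper <;> linarith

variable {E : Type*} [NormedAddCommGroup E] [InnerProductSpace ℝ E] [FiniteDimensional ℝ E]
  [MeasurableSpace E] [BorelSpace E]

theorem integrable_abs_inner_add_rpow_mul_rpow_neg {p α : ℝ} (hp : 0 ≤ p)
    (hα : Module.finrank ℝ E + p < 2 * α) (v : E) (c : ℝ) :
    Integrable fun z : E ↦ |inner ℝ v z + c| ^ p * (‖z‖ ^ 2 + 1) ^ (-α) := by
  have hα₀ : 0 < 2 * α := by linarith [(Module.finrank ℝ E).cast_nonneg (α := ℝ)]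
  refine ((integrable_one_add_norm (μ := volume) (r := 2 * α - p) (by linarith)).const_mul
    ((‖v‖ + |c|) ^ p * 2 ^ α)).mono' (by fun_prop) (.of_forall fun z ↦ ?_)
  have hz : 0 < 1 + ‖z‖ := by positivity
  have hlin : |inner ℝ v z + c| ≤ (‖v‖ + |c|) * (1 + ‖z‖) := by
    have := abs_real_inner_le_norm v z
    calc |inner ℝ v z + c| ≤ ‖v‖ * ‖z‖ + |c| := (abs_add_le _ _).trans (by linarith)
      _ ≤ (‖v‖ + |c|) * (1 + ‖z‖) := by nlinarith [norm_nonneg v, norm_nonneg z, abs_nonneg c]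
  have hdecay : (‖z‖ ^ 2 + 1) ^ (-α) ≤ 2 ^ α * (1 + ‖z‖) ^ (-(2 * α)) := by
    simpa [add_comm, neg_div] using rpow_neg_one_add_norm_sq_le z hα₀
  rw [Real.norm_eq_abs, abs_of_nonneg (by positivity)]
  calc |inner ℝ v z + c| ^ p * (‖z‖ ^ 2 + 1) ^ (-α)
      ≤ ((‖v‖ + |c|) * (1 + ‖z‖)) ^ p * (2 ^ α * (1 + ‖z‖) ^ (-(2 * α))) := by
        gcongr
    _ = (‖v‖ + |c|) ^ p * 2 ^ α * (1 + ‖z‖) ^ (-(2 * α - p)) := by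
        rw [mul_rpow (by positivity) hz.le, neg_sub, sub_eq_add_neg, rpow_add hz]
        ring

theorem integral_abs_inner_add_rpow_mul_radial_eq_sub (p : ℝ) (g : ℝ → ℝ) (v : E) (c : ℝ) :
    ∫ z : E, |inner ℝ v z + c| ^ p * g ‖z‖ = ∫ z : E, |inner ℝ v z - c| ^ p * g ‖z‖ := by
  rw [← integral_comp (LinearIsometryEquiv.neg ℝ (E := E))]
  congr 1 with z
  simp only [LinearIsometryEquiv.coe_neg, inner_neg_right, norm_neg]
  rw [← abs_neg, neg_add, neg_neg, ← sub_eq_add_neg]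

theorem integral_abs_inner_rpow_mul_radial_eq_norm_rpow_mul (p : ℝ) (g : ℝ → ℝ) {e : E}
    (he : ‖e‖ = 1) (v : E) :
    ∫ z : E, |inner ℝ v z| ^ p * g ‖z‖ = ‖v‖ ^ p * ∫ z : E, |inner ℝ e z| ^ p * g ‖z‖ := by
  obtain ⟨u, hu, hvu⟩ : ∃ u : E, ‖u‖ = 1 ∧ v = ‖v‖ • u := by
    rcases eq_or_ne v 0 with rfl | hv
    · exact ⟨e, he, by simp⟩
    · exact ⟨‖v‖⁻¹ • v, norm_smul_inv_norm hv, by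
        rw [smul_smul, mul_inv_cancel₀ (norm_ne_zero_iff.mpr hv), one_smul]⟩
  set T := (ℝ ∙ (e - u))ᗮ.reflection
  have hTe : T e = u := Submodule.reflection_sub (he.trans hu.symm)
  have hinner (z : E) : inner ℝ v (T z) = ‖v‖ * inner ℝ e z := by
    rw [← T.inner_map_map e, hTe, hvu, real_inner_smul_left, norm_smul, hu, norm_norm, mul_one]
  rw [← integral_comp T, ← integral_const_mul]
  congr 1 with z
  rw [T.norm_map, hinner, abs_mul, abs_norm, mul_rpow (norm_nonneg _) (abs_nonneg _), mul_assoc]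

theorem le_integral_abs_inner_add_rpow_mul_radial {p : ℝ} (hp : 1 ≤ p) {g : ℝ → ℝ}
    (hg : ∀ t, 0 ≤ g t)
    (hint : ∀ (w : E) (c : ℝ), Integrable fun z : E ↦ |inner ℝ w z + c| ^ p * g ‖z‖)
    {e : E} (he : ‖e‖ = 1) (v : E) (c : ℝ) :
    (∫ z : E, g ‖z‖) / 2 * |c| ^ p + (∫ z : E, |inner ℝ e z| ^ p * g ‖z‖) / 2 * ‖v‖ ^ p
      ≤ ∫ z : E, |inner ℝ v z + c| ^ p * g ‖z‖ := by
  have hint₀ : Integrable fun z : E ↦ |inner ℝ v z| ^ p * g ‖z‖ := by simpa using hint v 0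
  have hint_g : Integrable fun z : E ↦ g ‖z‖ := by simpa using hint 0 1
  have hint_sub : Integrable fun z : E ↦ |inner ℝ v z - c| ^ p * g ‖z‖ := by
    simpa [sub_eq_add_neg] using hint v (-c)
  calc (∫ z : E, g ‖z‖) / 2 * |c| ^ p + (∫ z : E, |inner ℝ e z| ^ p * g ‖z‖) / 2 * ‖v‖ ^ p
      = (∫ z : E, (|inner ℝ v z| ^ p * g ‖z‖ + |c| ^ p * g ‖z‖)) / 2 := by
        rw [integral_add hint₀ (hint_g.const_mul _), integral_const_mul,
          integral_abs_inner_rpow_mul_radial_eq_norm_rpow_mul p g he v]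
        ring
    _ ≤ (∫ z : E, (|inner ℝ v z + c| ^ p * g ‖z‖ + |inner ℝ v z - c| ^ p * g ‖z‖)) / 2 := by
        refine div_le_div_of_nonneg_right (integral_mono (hint₀.add (hint_g.const_mul _))
          ((hint v c).add hint_sub) fun z ↦ ?_) zero_le_two
        simp only [← add_mul]
        exact mul_le_mul_of_nonneg_right (abs_rpow_add_abs_rpow_le hp _ _) (hg _)
    _ = ∫ z : E, |inner ℝ v z + c| ^ p * g ‖z‖ := by
        rw [integral_add (hint v c) hint_sub, ← integral_abs_inner_add_rpow_mul_radial_eq_sub]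
        ring

/-- Lower bound for f(v) = ∫_{ℝ^{d-1}} |v'·z' + v_d|^p (|z'|²+1)^{-(d+ps+p)/2} dz':
f(v) ≥ (η₁/2)|v_d|^p + (η₂/2)|v'|^p. -/
theorem frakf_lower_bound
    (d : ℕ) (hd : 2 ≤ d) (p s : ℝ) (hp : 1 ≤ p) (hs : s ∈ Set.Ioo (0 : ℝ) 1)
    (v' : EuclideanSpace ℝ (Fin (d - 1))) (vd : ℝ) :
    (∫ z' : EuclideanSpace ℝ (Fin (d - 1)),
        (‖z'‖ ^ 2 + 1) ^ (-(((d : ℝ) + p * s + p) / 2))) / 2 * |vd| ^ p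
      + (∫ z' : EuclideanSpace ℝ (Fin (d - 1)),
          |z' ⟨0, by omega⟩| ^ p * (‖z'‖ ^ 2 + 1) ^ (-(((d : ℝ) + p * s + p) / 2))) / 2
        * ‖v'‖ ^ p
    ≤ ∫ z' : EuclideanSpace ℝ (Fin (d - 1)),
        |(inner ℝ v' z' : ℝ) + vd| ^ p * (‖z'‖ ^ 2 + 1) ^ (-(((d : ℝ) + p * s + p) / 2)) := by
  set α := ((d : ℝ) + p * s + p) / 2 with hα_def
  have hα : (Module.finrank ℝ (EuclideanSpace ℝ (Fin (d - 1))) : ℝ) + p < 2 * α := by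
    have hps : 0 < p * s := mul_pos (by linarith) hs.1
    rw [finrank_euclideanSpace_fin, Nat.cast_sub (by omega)]
    push_cast
    linarith [hα_def]
  have key := le_integral_abs_inner_add_rpow_mul_radial (g := fun t ↦ (t ^ 2 + 1) ^ (-α))
    (e := EuclideanSpace.single ⟨0, by omega⟩ 1) hp (fun t ↦ by positivity)
    (integrable_abs_inner_add_rpow_mul_rpow_neg (by linarith) hα) (by simp) v' vd
  simpa only [EuclideanSpace.inner_single_left, map_one, one_mul] using key
end
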